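/- arXiv:2501.13358 — 10 statements merged into one kernel-verified Lean document; each statement's English description precedes it below -/
import Mathlib

section
/- For all v, v', m, m' ∈ [0,1], one has |m − m'| ≤ 2 · sup_{b ∈ [0,1]} |r(b; v, m) − r(b; v', m')|, where r(b; v, m) = (v − b)·𝟙[b ≥ m]. -/
/-- First-price auction reward: `r(b; v, m) = (v - b) · 1[b ≥ m]`. -/
noncomputable def fpaReward (b v m : ℝ) : ℝ := if m ≤ b then v - b else 0

/-! Say `m < m'`. Every bid `b ∈ [m, m')` wins against `m` and loses against `m'`,
so the reward difference there is `v - b`. Hence `|v - m|` and `|v - b|` are both at most the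
supremum `S`, so `b - m ≤ 2 S`, and letting `b ↑ m'` gives `m' - m ≤ 2 S`. -/

lemma abs_fpaReward_le (b v m : ℝ) : |fpaReward b v m| ≤ |v - b| := by
  unfold fpaReward
  split_ifs
  · exact le_rfl
  · simp

lemma fpaReward_sub_of_le_of_lt {b m m' : ℝ} (v v' : ℝ) (hmb : m ≤ b) (hbm' : b < m') :
    fpaReward b v m - fpaReward b v' m' = v - b := by
  simp [fpaReward, hmb, hbm']

lemma bddAbove_abs_fpaReward_sub {v v' : ℝ} (m m' : ℝ) (hv : v ∈ Set.Icc (0:ℝ) 1)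
    (hv' : v' ∈ Set.Icc (0:ℝ) 1) :
    BddAbove (⋃ b, Set.range fun _ : b ∈ Set.Icc (0:ℝ) 1 =>
      |fpaReward b v m - fpaReward b v' m'|) := by
  refine ⟨2, ?_⟩
  rintro _ ⟨_, ⟨b, rfl⟩, ⟨hb, rfl⟩⟩
  have unit_dist {x y : ℝ} (hx : x ∈ Set.Icc (0:ℝ) 1) (hy : y ∈ Set.Icc (0:ℝ) 1) :
      |x - y| ≤ 1 :=
    abs_sub_le_of_nonneg_of_le hx.1 hx.2 hy.1 hy.2
  calc |fpaReward b v m - fpaReward b v' m'|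
      ≤ |fpaReward b v m| + |fpaReward b v' m'| := abs_sub _ _
    _ ≤ 1 + 1 := add_le_add ((abs_fpaReward_le b v m).trans (unit_dist hv hb))
        ((abs_fpaReward_le b v' m').trans (unit_dist hv' hb))
    _ = 2 := by norm_num

lemma abs_fpaReward_sub_le_biSup {b v v' : ℝ} (m m' : ℝ) (hv : v ∈ Set.Icc (0:ℝ) 1)
    (hv' : v' ∈ Set.Icc (0:ℝ) 1) (hb : b ∈ Set.Icc (0:ℝ) 1) :
    |fpaReward b v m - fpaReward b v' m'|
      ≤ ⨆ b ∈ Set.Icc (0:ℝ) 1, |fpaReward b v m - fpaReward b v' m'| :=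
  le_ciSup₂ (f := fun b (_ : b ∈ Set.Icc (0:ℝ) 1) => |fpaReward b v m - fpaReward b v' m'|)
    (bddAbove_abs_fpaReward_sub m m' hv hv') b hb

lemma sub_le_two_mul_of_forall_abs_sub_le {v m m' S : ℝ} (hmm' : m < m')
    (h : ∀ b, m ≤ b → b < m' → |v - b| ≤ S) : m' - m ≤ 2 * S := by
  have hvm := h m le_rfl hmm'
  suffices ∀ c < m', c ≤ m + 2 * S by linarith [le_of_forall_lt_imp_le_of_dense this]
  intro c hcm'
  rcases lt_or_ge c m with hcm | hmc
  · linarith [abs_nonneg (v - m)]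
  · linarith [h c hmc hcm', le_abs_self (v - m), neg_abs_le (v - c)]

/-- For all `v, v', m, m' ∈ [0,1]`,
`|m - m'| ≤ 2 · sup_{b ∈ [0,1]} |r(b; v, m) - r(b; v', m')|`. -/
theorem abs_diff_le_two_mul_sup_abs_reward_diff
    (v v' m m' : ℝ) (hv : v ∈ Set.Icc (0:ℝ) 1) (hv' : v' ∈ Set.Icc (0:ℝ) 1)
    (hm : m ∈ Set.Icc (0:ℝ) 1) (hm' : m' ∈ Set.Icc (0:ℝ) 1) :
    |m - m'| ≤ 2 * ⨆ b ∈ Set.Icc (0:ℝ) 1, |fpaReward b v m - fpaReward b v' m'| := by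
  wlog hle : m ≤ m' generalizing v v' m m'
  · simpa only [abs_sub_comm] using this v' v m' m hv' hv hm' hm (le_of_not_ge hle)
  rcases hle.eq_or_lt with rfl | hlt
  · simpa using Real.iSup_nonneg fun _ => Real.iSup_nonneg fun _ => abs_nonneg _
  rw [abs_sub_comm, abs_of_pos (sub_pos.2 hlt)]
  refine sub_le_two_mul_of_forall_abs_sub_le (v := v) hlt fun b hmb hbm' => ?_
  rw [← fpaReward_sub_of_le_of_lt v v' hmb hbm']
  exact abs_fpaReward_sub_le_biSup m m' hv hv' ⟨hm.1.trans hmb, hbm'.le.trans hm'.2⟩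
end

section
/- Let T be an even positive integer, let v_t = 1 for all t ∈ {1,…,T}, and let m_t = 0 for 1 ≤ t ≤ T/2 and m_t = 1/2 for T/2 < t ≤ T. Then Σ_{t=1}^T max{v_t − m_t, 0} − sup_{b ∈ [0,1]} Σ_{t=1}^T r(b; v_t, m_t) = T/4; in particular, the dynamic benchmark exceeds the best fixed bid's cumulative reward by T/4. -/
open Finset

theorem fpaReward_of_le {b v m : ℝ} (h : m ≤ b) : fpaReward b v m = v - b := if_pos h

theorem sum_Icc_one_add_of_piecewise_const {R : Type*} [NonAssocSemiring R] {f : ℕ → R}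
    {n k : ℕ} {a c : R} (h₀ : ∀ t, 1 ≤ t → t ≤ n → f t = a)
    (h₁ : ∀ t, n < t → t ≤ n + k → f t = c) :
    ∑ t ∈ Icc 1 (n + k), f t = n * a + k * c := by
  rw [← zero_add 1, Icc_add_one_left_eq_Ioc,
    ← sum_Ioc_consecutive f (Nat.zero_le n) (Nat.le_add_right n k),
    sum_congr rfl fun t ht => h₀ t (mem_Ioc.1 ht).1 (mem_Ioc.1 ht).2,
    sum_congr rfl fun t ht => h₁ t (mem_Ioc.1 ht).1 (mem_Ioc.1 ht).2]
  simp [nsmul_eq_mul]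

/-- The junk value `0` of an empty `⨆ _ : b ∈ s` is why `M` must be nonnegative. -/
theorem Real.biSup_eq_of_forall_le_of_eq {α : Type*} {s : Set α} {f : α → ℝ} {M : ℝ}
    (hM : 0 ≤ M) (hle : ∀ b ∈ s, f b ≤ M) {b₀ : α} (hb₀ : b₀ ∈ s) (hfb₀ : f b₀ = M) :
    ⨆ b ∈ s, f b = M := by
  have hub : ∀ b, ⨆ _ : b ∈ s, f b ≤ M := fun b =>
    Real.iSup_le (hle b) hM
  refine le_antisymm (Real.iSup_le hub hM) ?_
  calc M = ⨆ _ : b₀ ∈ s, f b₀ := by rw [ciSup_pos hb₀, hfb₀]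
    _ ≤ ⨆ b ∈ s, f b := le_ciSup ⟨M, Set.forall_mem_range.2 hub⟩ b₀

theorem two_phase_static_reward_le {N b : ℝ} (hN : 0 ≤ N) (hb : b ∈ Set.Icc (0 : ℝ) 1) :
    N * (1 - b) + N * fpaReward b 1 (1 / 2) ≤ N := by
  unfold fpaReward
  split_ifs with hhalf
  · nlinarith [hb.2]
  · nlinarith [hb.1]

theorem dynamic_benchmark_exceeds_static_general
    (T : ℕ) (hTeven : Even T) (v m : ℕ → ℝ)
    (hv : ∀ t, v t = 1)
    (hm₀ : ∀ t, 1 ≤ t → t ≤ T / 2 → m t = 0)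
    (hm₁ : ∀ t, T / 2 < t → t ≤ T → m t = 1 / 2) :
    (∑ t ∈ Finset.Icc 1 T, max (v t - m t) 0) -
      (⨆ b ∈ Set.Icc (0:ℝ) 1, ∑ t ∈ Finset.Icc 1 T, fpaReward b (v t) (m t)) =
      (T : ℝ) / 4 := by
  obtain ⟨N, rfl⟩ := hTeven
  rw [show (N + N) / 2 = N by omega] at hm₀ hm₁
  have hbenchmark : ∑ t ∈ Icc 1 (N + N), max (v t - m t) 0 = N * 1 + N * (1 / 2) :=
    sum_Icc_one_add_of_piecewise_const (fun t h1 h2 => by simp [hv, hm₀ t h1 h2])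
      (fun t h1 h2 => by norm_num [hv, hm₁ t h1 h2])
  have hstatic : ∀ b ∈ Set.Icc (0 : ℝ) 1, ∑ t ∈ Icc 1 (N + N), fpaReward b (v t) (m t) =
      N * (1 - b) + N * fpaReward b 1 (1 / 2) := fun b hb =>
    sum_Icc_one_add_of_piecewise_const
      (fun t h1 h2 => by rw [hv, hm₀ t h1 h2, fpaReward_of_le hb.1])
      (fun t h1 h2 => by rw [hv, hm₁ t h1 h2])
  have hbest : ⨆ b ∈ Set.Icc (0 : ℝ) 1, ∑ t ∈ Icc 1 (N + N), fpaReward b (v t) (m t) = N :=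
    Real.biSup_eq_of_forall_le_of_eq N.cast_nonneg
      (fun b hb => (hstatic b hb).trans_le (two_phase_static_reward_le N.cast_nonneg hb))
      (Set.left_mem_Icc.2 zero_le_one)
      (by rw [hstatic 0 (Set.left_mem_Icc.2 zero_le_one), fpaReward]; norm_num)
  rw [hbenchmark, hbest]
  push_cast
  ring

/-- With `v_t ≡ 1`, `m_t = 0` for `1 ≤ t ≤ T/2` and `m_t = 1/2` for `T/2 < t ≤ T`
(`T` even and positive), the dynamic benchmark exceeds the best fixed bid's
cumulative reward by exactly `T/4`. -/
theorem dynamic_benchmark_exceeds_static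
    (T : ℕ) (hT : 0 < T) (hTeven : Even T) (v m : ℕ → ℝ)
    (hv : ∀ t, v t = 1)
    (hm₀ : ∀ t, 1 ≤ t → t ≤ T / 2 → m t = 0)
    (hm₁ : ∀ t, T / 2 < t → t ≤ T → m t = 1 / 2) :
    (∑ t ∈ Finset.Icc 1 T, max (v t - m t) 0) -
      (⨆ b ∈ Set.Icc (0:ℝ) 1, ∑ t ∈ Finset.Icc 1 T, fpaReward b (v t) (m t)) =
      (T : ℝ) / 4 :=
  dynamic_benchmark_exceeds_static_general T hTeven v m hv hm₀ hm₁
end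

section
/- Let T ≥ 2 be an integer, ε ∈ (0,1], v_t = 1 for all t ∈ {1,…,T}, and m_t = 0 when t is odd and m_t = ε when t is even. Then Σ_{t=2}^T |m_t − m_{t−1}| = (T−1)·ε, while Σ_{t=2}^T sup_{b ∈ [0,1]} |r(b; v_t, m_t) − r(b; v_{t−1}, m_{t−1})| = T − 1. -/
open Finset

/-- Over `ℝ` an empty inner supremum is `sSup ∅ = 0`, hence the sign condition. -/
lemma Real.biSup_eq_of_isMaxOn {α : Type*} {s : Set α} {f : α → ℝ} {a : α} (ha : a ∈ s)
    (hmax : IsMaxOn f s a) (hfa : 0 ≤ f a) : ⨆ x ∈ s, f x = f a := by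
  refine le_antisymm (Real.iSup_le (fun x => Real.iSup_le (fun hx => hmax hx) hfa) hfa) ?_
  have hbdd : BddAbove (Set.range fun x => ⨆ _ : x ∈ s, f x) :=
    ⟨f a, by
      rintro _ ⟨x, rfl⟩
      exact Real.iSup_le (fun hx => hmax hx) hfa⟩
  exact le_ciSup_of_le hbdd a (ciSup_pos (f := fun _ => f a) ha).ge

lemma fpaReward_mem_Icc {b v : ℝ} (m : ℝ) (hb : b ∈ Set.Icc 0 v) :
    fpaReward b v m ∈ Set.Icc 0 v := by
  obtain ⟨hb0, hbv⟩ := hb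
  unfold fpaReward
  split_ifs <;> constructor <;> linarith

lemma abs_fpaReward_sub_le {b v : ℝ} (m m' : ℝ) (hb : b ∈ Set.Icc 0 v) :
    |fpaReward b v m - fpaReward b v m'| ≤ v :=
  abs_sub_le_of_nonneg_of_le (fpaReward_mem_Icc m hb).1 (fpaReward_mem_Icc m hb).2
    (fpaReward_mem_Icc m' hb).1 (fpaReward_mem_Icc m' hb).2

/-- The bid `0` wins against `m = 0` and loses against any `m > 0`, so it realises the full
reward gap `v`. -/
lemma iSup_abs_fpaReward_sub {v m m' : ℝ} (hv : 0 ≤ v)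
    (hm : (m = 0 ∧ 0 < m') ∨ (0 < m ∧ m' = 0)) :
    ⨆ b ∈ Set.Icc 0 v, |fpaReward b v m - fpaReward b v m'| = v := by
  have hgap : |fpaReward 0 v m - fpaReward 0 v m'| = v := by
    rcases hm with ⟨rfl, hm'⟩ | ⟨hm, rfl⟩
    · simp [fpaReward, hm'.not_ge, abs_of_nonneg hv]
    · simp [fpaReward, hm.not_ge, abs_of_nonneg hv]
  refine (Real.biSup_eq_of_isMaxOn (f := fun b => |fpaReward b v m - fpaReward b v m'|)
    (Set.left_mem_Icc.2 hv) (isMaxOn_iff.2 fun b hb => ?_) (abs_nonneg _)).trans hgap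
  rw [hgap]
  exact abs_fpaReward_sub_le m m' hb

lemma consecutive_eq_of_odd_of_even {α : Type*} {m : ℕ → α} {a b : α}
    (hodd : ∀ t, Odd t → m t = a) (heven : ∀ t, Even t → m t = b) {t : ℕ} (ht : 1 ≤ t) :
    (m t = a ∧ m (t - 1) = b) ∨ (m t = b ∧ m (t - 1) = a) := by
  rcases Nat.even_or_odd t with he | ho
  · exact .inr ⟨heven t he, hodd _ (Nat.Even.sub_odd ht he odd_one)⟩
  · exact .inl ⟨hodd t ho, heven _ (Nat.Odd.sub_odd ho odd_one)⟩

lemma sum_Icc_two_const {T : ℕ} (hT : 1 ≤ T) (c : ℝ) :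
    ∑ _t ∈ Icc 2 T, c = ((T : ℝ) - 1) * c := by
  rw [sum_const, Nat.card_Icc, nsmul_eq_mul, show T + 1 - 2 = T - 1 by omega,
    Nat.cast_sub hT, Nat.cast_one]

/-- With `v_t ≡ 1`, `m_t = 0` for odd `t` and `m_t = ε` for even `t` (`ε ∈ (0,1]`),
the temporal variation `Σ_{t=2}^T |m_t - m_{t-1}|` equals `(T-1)·ε`, while
`Σ_{t=2}^T sup_{b ∈ [0,1]} |r(b; v_t, m_t) - r(b; v_{t-1}, m_{t-1})|` equals `T - 1`. -/
theorem variation_vs_reward_variation_example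
    (T : ℕ) (hT : 2 ≤ T) (ε : ℝ) (hε : ε ∈ Set.Ioc (0:ℝ) 1) (v m : ℕ → ℝ)
    (hv : ∀ t, v t = 1)
    (hmodd : ∀ t, Odd t → m t = 0)
    (hmeven : ∀ t, Even t → m t = ε) :
    (∑ t ∈ Finset.Icc 2 T, |m t - m (t - 1)|) = ((T : ℝ) - 1) * ε ∧
    (∑ t ∈ Finset.Icc 2 T,
        ⨆ b ∈ Set.Icc (0:ℝ) 1,
          |fpaReward b (v t) (m t) - fpaReward b (v (t - 1)) (m (t - 1))|) =
      (T : ℝ) - 1 := by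
  have hstep (t : ℕ) (ht : t ∈ Icc 2 T) :
      (m t = 0 ∧ m (t - 1) = ε) ∨ (m t = ε ∧ m (t - 1) = 0) :=
    consecutive_eq_of_odd_of_even hmodd hmeven (by linarith [(mem_Icc.1 ht).1])
  constructor
  · rw [sum_congr rfl (g := fun _ => ε) fun t ht => ?_, sum_Icc_two_const (by omega)]
    rcases hstep t ht with ⟨h, h'⟩ | ⟨h, h'⟩ <;> simp [h, h', abs_of_pos hε.1]
  · rw [sum_congr rfl (g := fun _ => (1 : ℝ)) fun t ht => ?_, sum_Icc_two_const (by omega),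
      mul_one]
    rw [hv, hv]
    refine iSup_abs_fpaReward_sub zero_le_one ?_
    rcases hstep t ht with ⟨h, h'⟩ | ⟨h, h'⟩
    · exact .inl ⟨h, h' ▸ hε.1⟩
    · exact .inr ⟨h ▸ hε.1, h'⟩
end

section
/- Let T ≥ 2 be an integer, c ∈ [0,1], m_t = c for all t ∈ {1,…,T}, and v_t = 0 when t is odd and v_t = 1 when t is even. Then Σ_{t=2}^T |m_t − m_{t−1}| = 0, while Σ_{t=2}^T sup_{b ∈ [0,1]} |r(b; v_t, m_t) − r(b; v_{t−1}, m_{t−1})| = T − 1. -/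
/-! With a constant highest competing bid `c ≤ 1`, the rewards at two values `v, v'` differ by
`(v - v') · 1[b ≥ c]`, so the largest gap over bids `b ∈ [0,1]` is `|v - v'|`, attained at `b = 1`.
The values alternate between `0` and `1`, so each of the `T - 1` consecutive gaps is `1`,
whereas the competing bids never move. -/

theorem fpaReward_sub_fpaReward (b v v' m : ℝ) :
    fpaReward b v m - fpaReward b v' m = if m ≤ b then v - v' else 0 := by
  unfold fpaReward
  split_ifs <;> ring

theorem iSup_abs_fpaReward_sub_fpaReward {m : ℝ} (hm : m ≤ 1) (v v' : ℝ) :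
    ⨆ b ∈ Set.Icc (0 : ℝ) 1, |fpaReward b v m - fpaReward b v' m| = |v - v'| := by
  have gap_le (b : ℝ) : |fpaReward b v m - fpaReward b v' m| ≤ |v - v'| := by
    rw [fpaReward_sub_fpaReward]
    split_ifs <;> simp
  have inner_le (b : ℝ) : ⨆ _ : b ∈ Set.Icc (0 : ℝ) 1, |fpaReward b v m - fpaReward b v' m| ≤
      |v - v'| :=
    Real.iSup_le (fun _ => gap_le b) (abs_nonneg _)
  refine le_antisymm (Real.iSup_le inner_le (abs_nonneg _)) ?_
  have one_mem : (1 : ℝ) ∈ Set.Icc (0 : ℝ) 1 := ⟨zero_le_one, le_rfl⟩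
  refine le_ciSup_of_le ⟨_, Set.forall_mem_range.2 inner_le⟩ 1 ?_
  rw [ciSup_pos one_mem, fpaReward_sub_fpaReward, if_pos hm]

theorem abs_sub_pred_eq_one_of_alternating {v : ℕ → ℝ}
    (hvodd : ∀ t, Odd t → v t = 0) (hveven : ∀ t, Even t → v t = 1) {t : ℕ} (ht : 1 ≤ t) :
    |v t - v (t - 1)| = 1 := by
  obtain ⟨n, rfl⟩ := Nat.exists_eq_add_of_le' ht
  rw [Nat.add_sub_cancel]
  rcases Nat.even_or_odd n with hn | hn
  · simp [hvodd _ hn.add_one, hveven _ hn]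
  · simp [hveven _ hn.add_one, hvodd _ hn]

/-- With `m_t ≡ c ∈ [0,1]`, `v_t = 0` for odd `t` and `v_t = 1` for even `t`,
the temporal variation `Σ_{t=2}^T |m_t - m_{t-1}|` is `0`, while
`Σ_{t=2}^T sup_{b ∈ [0,1]} |r(b; v_t, m_t) - r(b; v_{t-1}, m_{t-1})|` equals `T - 1`. -/
theorem zero_variation_vs_reward_variation_example
    (T : ℕ) (hT : 2 ≤ T) (c : ℝ) (hc : c ∈ Set.Icc (0:ℝ) 1) (v m : ℕ → ℝ)
    (hm : ∀ t, m t = c)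
    (hvodd : ∀ t, Odd t → v t = 0)
    (hveven : ∀ t, Even t → v t = 1) :
    (∑ t ∈ Finset.Icc 2 T, |m t - m (t - 1)|) = 0 ∧
    (∑ t ∈ Finset.Icc 2 T,
        ⨆ b ∈ Set.Icc (0:ℝ) 1,
          |fpaReward b (v t) (m t) - fpaReward b (v (t - 1)) (m (t - 1))|) =
      (T : ℝ) - 1 := by
  refine ⟨by simp [hm], ?_⟩
  have each_gap_eq_one : ∀ t ∈ Finset.Icc 2 T,
      ⨆ b ∈ Set.Icc (0:ℝ) 1,
        |fpaReward b (v t) (m t) - fpaReward b (v (t - 1)) (m (t - 1))| = 1 := by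
    intro t ht
    rw [hm, hm, iSup_abs_fpaReward_sub_fpaReward hc.2,
      abs_sub_pred_eq_one_of_alternating hvodd hveven (by grind)]
  rw [Finset.sum_congr rfl each_gap_eq_one, Finset.sum_const, Nat.card_Icc, nsmul_one,
    Nat.cast_sub (by omega)]
  push_cast
  ring
end

section
/- For every integer n ≥ 1 and every sequence (v_t, m_t)_{t=1}^n ⊂ [0,1]^2, there exists τ ∈ [0,1] such that Σ_{t=1}^n max{v_t − m_t, 0} − Σ_{t=1}^n r(min{v_t, τ}; v_t, m_t) ≤ n · Σ_{t=2}^n |m_t − m_{t−1}|; that is, within a batch the transition cost from the best policy of the form f(v; τ) = min{v, τ} to the dynamic benchmark is at most the batch length times the temporal variation of the opponents' highest bid sequence. -/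
/-!
Take the threshold `τ = m t₀` to be the largest opponent bid in the batch. Since every
`m t ≤ τ`, bidding `min (v t) τ` loses at most `τ - m t` against the hindsight-optimal reward
`max (v t - m t) 0`, and `m t₀ - m t` is bounded by the temporal variation by telescoping.
Summing over the `n` rounds gives the bound.
-/

lemma max_sub_fpaReward_min_le {v m τ : ℝ} (hmτ : m ≤ τ) :
    max (v - m) 0 - fpaReward (min v τ) v m ≤ τ - m := by
  unfold fpaReward
  rcases le_total τ v with hτv | hvτ
  · rw [min_eq_right hτv, if_pos hmτ, max_eq_left (by linarith)]
    linarith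
  · rw [min_eq_left hvτ]
    split_ifs <;> simp only [sub_self, sub_zero] <;> exact max_le (by linarith) (by linarith)

section Telescoping

variable {α : Type*} [AddCommGroup α] [LinearOrder α] [IsOrderedAddMonoid α] (f : ℕ → α)

lemma abs_sub_le_sum_Ico_abs_sub {a b : ℕ} (hab : a ≤ b) :
    |f b - f a| ≤ ∑ i ∈ Finset.Ico a b, |f (i + 1) - f i| := by
  rw [← Finset.sum_Ico_sub f hab]
  exact Finset.abs_sum_le_sum_abs _ _

lemma abs_sub_le_sum_Ico_abs_sub_of_mem_Icc {lo hi s t : ℕ}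
    (hs : s ∈ Finset.Icc lo hi) (ht : t ∈ Finset.Icc lo hi) :
    |f s - f t| ≤ ∑ i ∈ Finset.Ico lo hi, |f (i + 1) - f i| := by
  wlog hts : t ≤ s generalizing s t
  · rw [abs_sub_comm]
    exact this ht hs (by omega)
  rw [Finset.mem_Icc] at hs ht
  calc |f s - f t| ≤ ∑ i ∈ Finset.Ico t s, |f (i + 1) - f i| := abs_sub_le_sum_Ico_abs_sub f hts
    _ ≤ ∑ i ∈ Finset.Ico lo hi, |f (i + 1) - f i| :=
      Finset.sum_le_sum_of_subset_of_nonneg (Finset.Ico_subset_Ico ht.1 hs.2)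
        fun _ _ _ => abs_nonneg _

end Telescoping

lemma sum_Icc_two_abs_sub_pred {α : Type*} [Lattice α] [AddCommGroup α] (f : ℕ → α) (n : ℕ) :
    ∑ t ∈ Finset.Icc 2 n, |f t - f (t - 1)| = ∑ i ∈ Finset.Ico 1 n, |f (i + 1) - f i| := by
  rw [← Finset.Ico_add_one_right_eq_Icc,
    ← Finset.sum_Ico_add' (fun t => |f t - f (t - 1)|) 1 n 1]
  simp only [add_tsub_cancel_right]

theorem transition_cost_le_length_mul_variation_general
    (n : ℕ) (hn : 1 ≤ n) (v m : ℕ → ℝ)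
    (hm : ∀ t, 1 ≤ t → t ≤ n → m t ∈ Set.Icc (0:ℝ) 1) :
    ∃ τ ∈ Set.Icc (0:ℝ) 1,
      (∑ t ∈ Finset.Icc 1 n, max (v t - m t) 0) -
          (∑ t ∈ Finset.Icc 1 n, fpaReward (min (v t) τ) (v t) (m t)) ≤
        (n : ℝ) * ∑ t ∈ Finset.Icc 2 n, |m t - m (t - 1)| := by
  obtain ⟨t₀, ht₀, hmax⟩ :=
    Finset.exists_max_image (Finset.Icc 1 n) m ⟨1, Finset.mem_Icc.mpr ⟨le_rfl, hn⟩⟩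
  have ht₀' := Finset.mem_Icc.mp ht₀
  refine ⟨m t₀, hm t₀ ht₀'.1 ht₀'.2, ?_⟩
  rw [sum_Icc_two_abs_sub_pred, ← Finset.sum_sub_distrib]
  calc ∑ t ∈ Finset.Icc 1 n, (max (v t - m t) 0 - fpaReward (min (v t) (m t₀)) (v t) (m t))
      ≤ ∑ t ∈ Finset.Icc 1 n, (m t₀ - m t) :=
        Finset.sum_le_sum fun t ht => max_sub_fpaReward_min_le (hmax t ht)
    _ ≤ ∑ _t ∈ Finset.Icc 1 n, ∑ i ∈ Finset.Ico 1 n, |m (i + 1) - m i| :=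
        Finset.sum_le_sum fun t ht =>
          (le_abs_self _).trans (abs_sub_le_sum_Ico_abs_sub_of_mem_Icc m ht₀ ht)
    _ = n * ∑ i ∈ Finset.Ico 1 n, |m (i + 1) - m i| := by simp

/-- Within a batch of length `n`, the transition cost from the best thresholded policy
`f(v; τ) = min {v, τ}` to the dynamic benchmark is at most the batch length times the
temporal variation of the opponents' highest bid sequence. -/
theorem transition_cost_le_length_mul_variation
    (n : ℕ) (hn : 1 ≤ n) (v m : ℕ → ℝ)
    (hv : ∀ t, 1 ≤ t → t ≤ n → v t ∈ Set.Icc (0:ℝ) 1)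
    (hm : ∀ t, 1 ≤ t → t ≤ n → m t ∈ Set.Icc (0:ℝ) 1) :
    ∃ τ ∈ Set.Icc (0:ℝ) 1,
      (∑ t ∈ Finset.Icc 1 n, max (v t - m t) 0) -
          (∑ t ∈ Finset.Icc 1 n, fpaReward (min (v t) τ) (v t) (m t)) ≤
        (n : ℝ) * ∑ t ∈ Finset.Icc 2 n, |m t - m (t - 1)| :=
  transition_cost_le_length_mul_variation_general n hn v m hm
end

section
/- For every integer n ≥ 1 and every sequence (v_t, m_t)_{t=1}^n ⊂ [0,1]^2 such that m_1 = m_2 = ⋯ = m_{n−1} (the opponents' highest bid is constant except possibly at the last round), there exists τ ∈ [0,1] such that Σ_{t=1}^n max{v_t − m_t, 0} − Σ_{t=1}^n r(min{v_t, τ}; v_t, m_t) ≤ 1; that is, the transition cost over a batch containing at most one switch, occurring at its last round, is at most 1. -/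
theorem fpaReward_min_self (v m : ℝ) : fpaReward (min v m) v m = max (v - m) 0 := by
  rcases le_total m v with h | h
  · simp [fpaReward, h]
  · rcases h.lt_or_eq with h | rfl
    · simp [fpaReward, h.le, h.not_ge]
    · simp [fpaReward]

theorem fpaReward_nonneg {b v m : ℝ} (hb : b ≤ v) : 0 ≤ fpaReward b v m := by
  unfold fpaReward
  split_ifs <;> linarith

theorem max_sub_fpaReward_le_one {b v m : ℝ} (hb : b ≤ v) (hv : v ≤ 1) (hm : 0 ≤ m) :
    max (v - m) 0 - fpaReward b v m ≤ 1 := by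
  have := fpaReward_nonneg (m := m) hb
  have : max (v - m) 0 ≤ 1 := max_le (by linarith) zero_le_one
  linarith

/-- Within a batch of length `n` in which the opponents' highest bid is constant except
possibly at the last round, the transition cost from the best thresholded policy
`f(v; τ) = min {v, τ}` to the dynamic benchmark is at most `1`. -/
theorem transition_cost_le_one_of_single_switch
    (n : ℕ) (hn : 1 ≤ n) (v m : ℕ → ℝ)
    (hv : ∀ t, 1 ≤ t → t ≤ n → v t ∈ Set.Icc (0:ℝ) 1)
    (hm : ∀ t, 1 ≤ t → t ≤ n → m t ∈ Set.Icc (0:ℝ) 1)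
    (hconst : ∀ s, 1 ≤ s → s ≤ n - 1 → m s = m 1) :
    ∃ τ ∈ Set.Icc (0:ℝ) 1,
      (∑ t ∈ Finset.Icc 1 n, max (v t - m t) 0) -
          (∑ t ∈ Finset.Icc 1 n, fpaReward (min (v t) τ) (v t) (m t)) ≤ 1 := by
  refine ⟨m 1, hm 1 le_rfl hn, ?_⟩
  obtain ⟨k, rfl⟩ : ∃ k, n = k + 1 := ⟨n - 1, by omega⟩
  rw [← Finset.sum_sub_distrib, Finset.sum_Icc_succ_top (by omega)]
  have h_early : ∑ t ∈ Finset.Icc 1 k,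
      (max (v t - m t) 0 - fpaReward (min (v t) (m 1)) (v t) (m t)) = 0 :=
    Finset.sum_eq_zero fun t ht => by
      obtain ⟨h1, htk⟩ := Finset.mem_Icc.1 ht
      rw [hconst t h1 (by omega), fpaReward_min_self, sub_self]
  have h_last := max_sub_fpaReward_le_one (m := m (k + 1)) (min_le_left (v (k + 1)) (m 1))
    (hv (k + 1) (by omega) le_rfl).2 (hm (k + 1) (by omega) le_rfl).1
  linarith
end

section
/- Let H ≥ 2 be an integer. For each τ ∈ {1,…,H} define the H-round instance v_t = 1 for all t and m_t^τ = 0 for t < τ, m_t^τ = 1/H for τ ≤ t ≤ H. Then for every randomized bidding policy π over H rounds, the average over τ drawn uniformly from {1,…,H} of the expected dynamic regret of π on the instance (v_t, m_t^τ)_{t=1}^H is at least 1/2 − 1/(2H). -/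
/-- A randomized bidding policy over `T` rounds: a probability space together with,
for each round `t`, a measurable map from (history of `(vₛ, mₛ)` for `s < t`, current
value `vₜ`, randomness `ω`) to a bid in `[0,1]`. Rounds are indexed `0, …, T-1`. -/
structure BidPolicy (T : ℕ) where
  Ω : Type
  [instMS : MeasurableSpace Ω]
  μ : MeasureTheory.Measure Ω
  isProb : MeasureTheory.IsProbabilityMeasure μ
  bid : (t : ℕ) → (Fin t → ℝ × ℝ) → ℝ → Ω → ℝ
  bid_mem : ∀ t h v ω, bid t h v ω ∈ Set.Icc (0:ℝ) 1
  bid_measurable : ∀ t, Measurable fun p : (Fin t → ℝ × ℝ) × ℝ × Ω => bid t p.1 p.2.1 p.2.2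

attribute [instance] BidPolicy.instMS

/-- The bid of the policy at round `t` on the sequence `(v, m)`, given randomness `ω`. -/
noncomputable def BidPolicy.bids {T : ℕ} (π : BidPolicy T) (v m : ℕ → ℝ) (t : ℕ)
    (ω : π.Ω) : ℝ :=
  π.bid t (fun s : Fin t => (v s, m s)) (v t) ω

/-- Expected dynamic regret of a policy on the sequence `(v, m)` over `T` rounds. -/
noncomputable def BidPolicy.expRegret {T : ℕ} (π : BidPolicy T) (v m : ℕ → ℝ) : ℝ :=
  ∫ ω, (∑ t ∈ Finset.range T,
    (max (v t - m t) 0 - fpaReward (π.bids v m t ω) (v t) (m t))) ∂π.μ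

/-- Temporal variation `Σ_{t=2}^T |m_t - m_{t-1}|` (rounds indexed `0, …, T-1`). -/
noncomputable def totalVariation (m : ℕ → ℝ) (T : ℕ) : ℝ :=
  ∑ t ∈ Finset.range (T - 1), |m (t + 1) - m t|

/-- Number of switches `Σ_{t=2}^T 1[m_t ≠ m_{t-1}]` (rounds indexed `0, …, T-1`). -/
noncomputable def numSwitches (m : ℕ → ℝ) (T : ℕ) : ℝ :=
  ∑ t ∈ Finset.range (T - 1), if m (t + 1) ≠ m t then 1 else 0

/-!
Before the jump the policy sees only zero prices, so at round `t` it places the same bid `b`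
on every instance whose jump comes later. Against price `0` that bid loses `b`; on the
instance whose jump is exactly at round `t` it loses `1 - 1/H` unless `b ≥ 1/H`, and then
still `b - 1/H`. With `c = H - 1 - t` later jumps, either way the total loss at round `t`
is at least `c / H`, and summing over `t` gives `(H - 1) / 2`.
-/

open MeasureTheory Finset

attribute [instance] BidPolicy.isProb

noncomputable def fpaRegret (b v m : ℝ) : ℝ := max (v - m) 0 - fpaReward b v m

lemma fpaRegret_nonneg (b v m : ℝ) : 0 ≤ fpaRegret b v m := by
  unfold fpaRegret fpaReward
  split_ifs
  · linarith [le_max_left (v - m) 0]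
  · simp

lemma fpaRegret_zero_price {b v : ℝ} (hb : 0 ≤ b) (hv : 0 ≤ v) : fpaRegret b v 0 = b := by
  simp [fpaRegret, fpaReward, hb, hv]

lemma mul_le_fpaRegret_zero_then_jump {b c p : ℝ} (hb : 0 ≤ b) (hc : 0 ≤ c)
    (hcp : (c + 1) * p ≤ 1) : c * p ≤ c * b + fpaRegret b 1 p := by
  unfold fpaRegret fpaReward
  have hmax : 1 - p ≤ max (1 - p) 0 := le_max_left _ _
  split_ifs
  · nlinarith
  · nlinarith

lemma sum_range_natCast (n : ℕ) : ∑ t ∈ range n, (t : ℝ) = n * (n - 1) / 2 := by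
  induction n with
  | zero => simp
  | succ n ih =>
    rw [sum_range_succ, ih]
    push_cast
    ring

/-- The paper's `m^τ`, with rounds indexed from `0`: index `t` is round `t + 1`. -/
noncomputable def singleJumpPrices (H τ : ℕ) : ℕ → ℝ := fun t => if t + 1 < τ then 0 else 1 / H

namespace BidPolicy

variable {T : ℕ} (π : BidPolicy T)

noncomputable def regret (v m : ℕ → ℝ) (ω : π.Ω) : ℝ :=
  ∑ t ∈ range T, fpaRegret (π.bids v m t ω) (v t) (m t)

lemma bids_congr {v v' m m' : ℕ → ℝ} {t : ℕ} (hv : ∀ s ≤ t, v s = v' s)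
    (hm : ∀ s < t, m s = m' s) : π.bids v m t = π.bids v' m' t := by
  funext ω
  unfold bids
  congr 1
  · funext s
    rw [hv s s.isLt.le, hm s s.isLt]
  · exact hv t le_rfl

lemma measurable_bids (v m : ℕ → ℝ) (t : ℕ) : Measurable (π.bids v m t) :=
  (π.bid_measurable t).comp (measurable_const.prodMk (measurable_const.prodMk measurable_id))

lemma bids_mem_Icc (v m : ℕ → ℝ) (t : ℕ) (ω : π.Ω) : π.bids v m t ω ∈ Set.Icc 0 1 :=
  π.bid_mem _ _ _ ω

lemma integrable_fpaReward_bids (v m : ℕ → ℝ) (t : ℕ) :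
    Integrable (fun ω => fpaReward (π.bids v m t ω) (v t) (m t)) π.μ := by
  have hmeas : Measurable fun b => fpaReward b (v t) (m t) :=
    Measurable.ite (measurableSet_le measurable_const measurable_id)
      (measurable_const.sub measurable_id) measurable_const
  refine .of_bound ((hmeas.comp (π.measurable_bids v m t)).aestronglyMeasurable) (|v t| + 1)
    (ae_of_all _ fun ω => ?_)
  obtain ⟨hb0, hb1⟩ := π.bids_mem_Icc v m t ω
  unfold fpaReward
  split_ifs
  · rw [Real.norm_eq_abs]
    refine (abs_sub _ _).trans ?_
    rw [abs_of_nonneg hb0]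
    linarith
  · simp [add_nonneg]

lemma integrable_regret (v m : ℕ → ℝ) : Integrable (π.regret v m) π.μ :=
  integrable_finsetSum _ fun t _ =>
    (integrable_const _).sub (π.integrable_fpaReward_bids v m t)

lemma le_sum_expRegret {ι : Type*} (s : Finset ι) (v : ℕ → ℝ) (m : ι → ℕ → ℝ) {c : ℝ}
    (h : ∀ ω, c ≤ ∑ i ∈ s, π.regret v (m i) ω) : c ≤ ∑ i ∈ s, π.expRegret v (m i) :=
  calc c = ∫ _, c ∂π.μ := by simp
    _ ≤ ∫ ω, ∑ i ∈ s, π.regret v (m i) ω ∂π.μ :=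
      integral_mono (integrable_const c)
        (integrable_finsetSum _ fun i _ => π.integrable_regret v (m i)) h
    _ = ∑ i ∈ s, π.expRegret v (m i) :=
      integral_finsetSum _ fun i _ => π.integrable_regret v (m i)

lemma bids_singleJumpPrices {H τ t : ℕ} (ht : t < τ) :
    π.bids (fun _ => 1) (singleJumpPrices H τ) t = π.bids (fun _ => 1) 0 t :=
  π.bids_congr (fun _ _ => rfl) fun s hs => if_pos (by omega)

lemma sub_one_sub_div_le_sum_fpaRegret_singleJump {H t : ℕ} (ht : t < H) (ω : π.Ω) :
    ((H : ℝ) - 1 - t) / H ≤ ∑ τ ∈ Icc 1 H,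
      fpaRegret (π.bids (fun _ => 1) (singleJumpPrices H τ) t ω) 1 (singleJumpPrices H τ t) := by
  set b := π.bids (fun _ => 1) 0 t ω
  have hb : 0 ≤ b := (π.bids_mem_Icc _ _ t ω).1
  have hH : (0 : ℝ) < H := by exact_mod_cast (by omega : 0 < H)
  have hc : ((H - (t + 1) : ℕ) : ℝ) = H - 1 - t := by
    rw [Nat.cast_sub ht]
    push_cast
    ring
  have hlater : ∑ τ ∈ Ioc (t + 1) H,
      fpaRegret (π.bids (fun _ => 1) (singleJumpPrices H τ) t ω) 1 (singleJumpPrices H τ t)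
        = (H - 1 - t) * b := by
    rw [← hc, ← Nat.card_Ioc, ← nsmul_eq_mul, ← sum_const]
    refine sum_congr rfl fun τ hτ => ?_
    rw [mem_Ioc] at hτ
    rw [π.bids_singleJumpPrices (by omega), singleJumpPrices, if_pos hτ.1]
    exact fpaRegret_zero_price hb zero_le_one
  have hjump : fpaRegret (π.bids (fun _ => 1) (singleJumpPrices H (t + 1)) t ω) 1
      (singleJumpPrices H (t + 1) t) = fpaRegret b 1 (1 / H) := by
    rw [π.bids_singleJumpPrices (by omega), singleJumpPrices, if_neg (lt_irrefl _)]
  calc ((H : ℝ) - 1 - t) / H = (H - 1 - t) * (1 / H) := by ring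
    _ ≤ (H - 1 - t) * b + fpaRegret b 1 (1 / H) :=
      mul_le_fpaRegret_zero_then_jump hb (by rw [← hc]; positivity) (by field_simp; linarith)
    _ = ∑ τ ∈ Icc (t + 1) H,
        fpaRegret (π.bids (fun _ => 1) (singleJumpPrices H τ) t ω) 1 (singleJumpPrices H τ t) := by
      rw [Icc_eq_cons_Ioc (by omega), sum_cons, hlater, hjump, add_comm]
    _ ≤ _ := sum_le_sum_of_subset_of_nonneg (Icc_subset_Icc_left (by omega))
      fun _ _ _ => fpaRegret_nonneg _ _ _

end BidPolicy

/-- Lower-bound building block: with `v_t ≡ 1` and `m_t^τ = 0` for rounds before `τ`,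
`m_t^τ = 1/H` from round `τ` on (rounds `1, …, H` here indexed `0, …, H-1`, so round
`t+1 < τ` means index `t` is before the jump), the average over `τ` uniform in
`{1, …, H}` of the expected dynamic regret of any policy is at least `1/2 - 1/(2H)`. -/
theorem single_jump_batch_lower_bound
    (H : ℕ) (hH : 2 ≤ H) (π : BidPolicy H) :
    1 / 2 - 1 / (2 * (H : ℝ)) ≤
      (1 / (H : ℝ)) * ∑ τ ∈ Finset.Icc 1 H,
        π.expRegret (fun _ => 1) (fun t => if t + 1 < τ then 0 else 1 / (H : ℝ)) := by
  have hH0 : (0 : ℝ) < H := by exact_mod_cast (by omega : 0 < H)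
  have hsum : ((H : ℝ) - 1) / 2 ≤
      ∑ τ ∈ Icc 1 H, π.expRegret (fun _ => 1) (singleJumpPrices H τ) := by
    refine π.le_sum_expRegret _ _ _ fun ω => ?_
    calc ((H : ℝ) - 1) / 2 = ∑ t ∈ range H, ((H : ℝ) - 1 - t) / H := by
          rw [← sum_div, sum_sub_distrib, sum_range_natCast]
          simp only [sum_const, card_range, nsmul_eq_mul]
          field_simp
          ring
      _ ≤ ∑ t ∈ range H, ∑ τ ∈ Icc 1 H, fpaRegret
            (π.bids (fun _ => 1) (singleJumpPrices H τ) t ω) 1 (singleJumpPrices H τ t) :=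
          sum_le_sum fun t ht => π.sub_one_sub_div_le_sum_fpaRegret_singleJump (mem_range.1 ht) ω
      _ = _ := sum_comm
  calc 1 / 2 - 1 / (2 * (H : ℝ)) = 1 / H * (((H : ℝ) - 1) / 2) := by field_simp
    _ ≤ _ := mul_le_mul_of_nonneg_left hsum (by positivity)
end

section
/- Let T be a positive integer and L a positive integer with L ≤ T/3. For every randomized bidding policy π over T rounds, there exists a sequence (v_t, m_t)_{t=1}^T ⊂ [0,1]^2 with Σ_{t=2}^T 𝟙[m_t ≠ m_{t−1}] ≤ L such that the expected dynamic regret of π on this sequence is at least L/8. -/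
/-!
Take values `vₜ = 1`. In each of the first `L` rounds the adversary looks at the policy's
expected bid `β` on the history it has itself produced (it knows `π`, and the history is
deterministic because the values are). If `β ≥ 1/4` it sets `mₜ = 0`, and the regret of that
round is the bid itself; otherwise it sets `mₜ = 1/2`, and the regret is at least `1/2 - bₜ`.
Either way the expected regret of the round is at least `1/4`. From round `L` on, `mₜ = 0`,
so there are at most `L` switches and the regret is at least `L/4`.
-/

open MeasureTheory Finset

noncomputable def roundRegret (b v m : ℝ) : ℝ := max (v - m) 0 - fpaReward b v m

lemma roundRegret_nonneg (b v m : ℝ) : 0 ≤ roundRegret b v m := by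
  unfold roundRegret fpaReward
  split_ifs <;> grind

lemma roundRegret_le_one {b v m : ℝ} (hb : b ∈ Set.Icc (0 : ℝ) 1) (hv : v ∈ Set.Icc (0 : ℝ) 1)
    (hm : m ∈ Set.Icc (0 : ℝ) 1) : roundRegret b v m ≤ 1 := by
  unfold roundRegret fpaReward
  split_ifs <;> grind

lemma roundRegret_one_zero {b : ℝ} (hb : 0 ≤ b) : roundRegret b 1 0 = b := by
  simp [roundRegret, fpaReward, hb]

lemma half_sub_le_roundRegret_one_half {b : ℝ} (hb : 0 ≤ b) :
    1 / 2 - b ≤ roundRegret b 1 (1 / 2) := by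
  unfold roundRegret fpaReward
  split_ifs <;> grind

lemma measurable_roundRegret (v m : ℝ) : Measurable fun b => roundRegret b v m :=
  measurable_const.sub <|
    Measurable.ite measurableSet_Ici (measurable_const.sub measurable_id) measurable_const

lemma integrable_roundRegret_comp {Ω : Type*} [MeasurableSpace Ω] {μ : Measure Ω}
    [IsFiniteMeasure μ] {b : Ω → ℝ} (hb : Measurable b) (hb01 : ∀ ω, b ω ∈ Set.Icc (0 : ℝ) 1)
    {v m : ℝ} (hv : v ∈ Set.Icc (0 : ℝ) 1) (hm : m ∈ Set.Icc (0 : ℝ) 1) :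
    Integrable (fun ω => roundRegret (b ω) v m) μ :=
  .of_bound ((measurable_roundRegret v m).comp hb).aestronglyMeasurable 1 <|
    .of_forall fun ω => by
      rw [Real.norm_of_nonneg (roundRegret_nonneg _ _ _)]
      exact roundRegret_le_one (hb01 ω) hv hm

noncomputable def hardCompetingBid (β : ℝ) : ℝ := if 1 / 4 ≤ β then 0 else 1 / 2

lemma hardCompetingBid_mem_Icc (β : ℝ) : hardCompetingBid β ∈ Set.Icc (0 : ℝ) 1 := by
  unfold hardCompetingBid
  split_ifs <;> norm_num

lemma quarter_le_integral_roundRegret_hardCompetingBid {Ω : Type*} [MeasurableSpace Ω]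
    {μ : Measure Ω} [IsProbabilityMeasure μ] {b : Ω → ℝ} (hb : Measurable b)
    (hb01 : ∀ ω, b ω ∈ Set.Icc (0 : ℝ) 1) :
    1 / 4 ≤ ∫ ω, roundRegret (b ω) 1 (hardCompetingBid (∫ ω, b ω ∂μ)) ∂μ := by
  have hbi : Integrable b μ :=
    .of_bound hb.aestronglyMeasurable 1 <| .of_forall fun ω => by
      rw [Real.norm_of_nonneg (hb01 ω).1]; exact (hb01 ω).2
  unfold hardCompetingBid
  split_ifs with hβ
  · simpa only [roundRegret_one_zero (hb01 _).1] using hβ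
  · calc (1 : ℝ) / 4 ≤ ∫ ω, (1 / 2 - b ω) ∂μ := by
          rw [integral_sub (integrable_const _) hbi, integral_const, probReal_univ, one_smul]
          linarith
      _ ≤ ∫ ω, roundRegret (b ω) 1 (1 / 2) ∂μ :=
          integral_mono ((integrable_const _).sub hbi)
            (integrable_roundRegret_comp hb hb01 (by norm_num) (by norm_num))
            fun ω => half_sub_le_roundRegret_one_half (hb01 ω).1

lemma numSwitches_le_of_forall_ge_eq {m : ℕ → ℝ} {L : ℕ} {c : ℝ} (h : ∀ t, L ≤ t → m t = c)
    (T : ℕ) : numSwitches m T ≤ L := by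
  have hsub : {t ∈ range (T - 1) | m (t + 1) ≠ m t} ⊆ range L := fun t ht => by
    by_contra hLt
    simp only [mem_filter, mem_range, not_lt] at ht hLt
    exact ht.2 ((h _ (hLt.trans t.le_succ)).trans (h _ hLt).symm)
  rw [numSwitches, sum_boole]
  exact_mod_cast (card_le_card hsub).trans (card_range L).le

namespace BidPolicy

variable {T : ℕ} (π : BidPolicy T)

lemma measurable_bid (t : ℕ) (h : Fin t → ℝ × ℝ) (v : ℝ) : Measurable (π.bid t h v) :=
  (π.bid_measurable t).comp (measurable_const.prodMk (measurable_const.prodMk measurable_id))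

lemma expRegret_eq_sum_integral {v m : ℕ → ℝ} (hv : ∀ t, v t ∈ Set.Icc (0 : ℝ) 1)
    (hm : ∀ t, m t ∈ Set.Icc (0 : ℝ) 1) :
    π.expRegret v m = ∑ t ∈ range T, ∫ ω, roundRegret (π.bids v m t ω) (v t) (m t) ∂π.μ :=
  have := π.isProb
  integral_finsetSum _ fun t _ =>
    integrable_roundRegret_comp (π.measurable_bid _ _ _) (fun _ => π.bid_mem _ _ _ _) (hv t) (hm t)

noncomputable def hardCompetingBids (L : ℕ) : ℕ → ℝ
  | t => if t < L then
      hardCompetingBid (∫ ω, π.bid t (fun s : Fin t => (1, hardCompetingBids L s)) 1 ω ∂π.μ)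
    else 0
  decreasing_by exact s.isLt

lemma hardCompetingBids_of_lt {L t : ℕ} (ht : t < L) :
    π.hardCompetingBids L t =
      hardCompetingBid (∫ ω, π.bids (fun _ => 1) (π.hardCompetingBids L) t ω ∂π.μ) := by
  rw [hardCompetingBids, if_pos ht]
  rfl

lemma hardCompetingBids_of_le {L t : ℕ} (ht : L ≤ t) : π.hardCompetingBids L t = 0 := by
  rw [hardCompetingBids, if_neg ht.not_gt]

lemma hardCompetingBids_mem_Icc (L t : ℕ) : π.hardCompetingBids L t ∈ Set.Icc (0 : ℝ) 1 := by
  rw [hardCompetingBids]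
  split_ifs
  exacts [hardCompetingBid_mem_Icc _, ⟨le_rfl, zero_le_one⟩]

end BidPolicy

theorem switching_budget_minimax_lower_bound_general
    (T L : ℕ) (hLT : (L : ℝ) ≤ (T : ℝ) / 3)
    (π : BidPolicy T) :
    ∃ v m : ℕ → ℝ, (∀ t, v t ∈ Set.Icc (0:ℝ) 1) ∧ (∀ t, m t ∈ Set.Icc (0:ℝ) 1) ∧
      numSwitches m T ≤ (L : ℝ) ∧
      (L : ℝ) / 8 ≤ π.expRegret v m := by
  have := π.isProb
  have hLT' : L ≤ T := by
    have : (L : ℝ) ≤ T := by linarith [T.cast_nonneg (α := ℝ)]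
    exact_mod_cast this
  have hv : ∀ t : ℕ, (1 : ℝ) ∈ Set.Icc (0 : ℝ) 1 := fun _ => ⟨zero_le_one, le_rfl⟩
  refine ⟨fun _ => 1, π.hardCompetingBids L, hv, π.hardCompetingBids_mem_Icc L,
    numSwitches_le_of_forall_ge_eq (fun _ => π.hardCompetingBids_of_le) T, ?_⟩
  rw [π.expRegret_eq_sum_integral hv (π.hardCompetingBids_mem_Icc L)]
  calc (L : ℝ) / 8 ≤ ∑ _t ∈ range L, (1 : ℝ) / 4 := by
        rw [sum_const, card_range, nsmul_eq_mul]
        linarith [L.cast_nonneg (α := ℝ)]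
    _ ≤ ∑ t ∈ range L, ∫ ω, roundRegret (π.bids _ _ t ω) 1 (π.hardCompetingBids L t) ∂π.μ :=
        sum_le_sum fun t ht => by
          rw [π.hardCompetingBids_of_lt (mem_range.mp ht)]
          exact quarter_le_integral_roundRegret_hardCompetingBid (π.measurable_bid _ _ _)
            fun _ => π.bid_mem _ _ _ _
    _ ≤ _ := sum_le_sum_of_subset_of_nonneg (range_subset_range.mpr hLT')
        fun _ _ _ => integral_nonneg fun _ => roundRegret_nonneg _ _ _

/-- Minimax lower bound under the switching constraint: for a positive integer
`L ≤ T/3`, every randomized bidding policy suffers expected dynamic regret at least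
`L/8` on some sequence in `[0,1]²` with at most `L` switches. -/
theorem switching_budget_minimax_lower_bound
    (T L : ℕ) (hT : 0 < T) (hL : 0 < L) (hLT : (L : ℝ) ≤ (T : ℝ) / 3)
    (π : BidPolicy T) :
    ∃ v m : ℕ → ℝ, (∀ t, v t ∈ Set.Icc (0:ℝ) 1) ∧ (∀ t, m t ∈ Set.Icc (0:ℝ) 1) ∧
      numSwitches m T ≤ (L : ℝ) ∧
      (L : ℝ) / 8 ≤ π.expRegret v m :=
  switching_budget_minimax_lower_bound_general T L hLT π
end

section
/- There exist constants C > 0 and k ∈ ℕ such that for every integer T ≥ 2 there exists a single randomized bidding policy π over T rounds such that for every sequence (v_t, m_t)_{t=1}^T ⊂ [0,1]^2, the expected dynamic regret of π on this sequence is at most C · (L_T + 1) · (1 + log T)^k, where L_T = Σ_{t=2}^T 𝟙[m_t ≠ m_{t−1}] is the number of switches of the opponents' highest bid sequence. -/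
/-!
With full feedback a policy sees `mₜ` after round `t`, so it can bid `mₜ` in round `t + 1`
whenever `mₜ ≤ vₜ₊₁` and `0` otherwise. If `mₜ₊₁ = mₜ` this bid is exactly the optimal
one, so only the first round and the rounds right after a switch incur regret, at most `2`
each: the regret is at most `2 (L_T + 1)`, with no logarithmic factor at all.
-/

open MeasureTheory Finset

namespace BidPolicy

noncomputable def ofDeterministic {T : ℕ} (bid : (t : ℕ) → (Fin t → ℝ × ℝ) → ℝ → ℝ)
    (bid_mem : ∀ t h v, bid t h v ∈ Set.Icc (0 : ℝ) 1)
    (bid_measurable : ∀ t, Measurable fun p : (Fin t → ℝ × ℝ) × ℝ => bid t p.1 p.2) :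
    BidPolicy T where
  Ω := Unit
  μ := Measure.dirac ()
  isProb := inferInstance
  bid t h v _ := bid t h v
  bid_mem t h v _ := bid_mem t h v
  bid_measurable t := (bid_measurable t).comp (measurable_fst.prodMk measurable_snd.fst)

theorem expRegret_ofDeterministic {T : ℕ} (bid : (t : ℕ) → (Fin t → ℝ × ℝ) → ℝ → ℝ)
    (bid_mem : ∀ t h v, bid t h v ∈ Set.Icc (0 : ℝ) 1)
    (bid_measurable : ∀ t, Measurable fun p : (Fin t → ℝ × ℝ) × ℝ => bid t p.1 p.2)
    (v m : ℕ → ℝ) :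
    (ofDeterministic (T := T) bid bid_mem bid_measurable).expRegret v m =
      ∑ t ∈ range T, (max (v t - m t) 0 -
        fpaReward (bid t (fun s : Fin t => (v s, m s)) (v t)) (v t) (m t)) :=
  integral_dirac _ ()

end BidPolicy

/-- The clamp only matters on histories outside `[0, 1]`, where a bid must still lie in
`[0, 1]`. -/
noncomputable def followLastBid : (t : ℕ) → (Fin t → ℝ × ℝ) → ℝ → ℝ
  | 0, _, _ => 0
  | n + 1, h, v =>
      let b := min 1 (max 0 (h (Fin.last n)).2)
      if b ≤ v then b else 0

theorem followLastBid_mem (t : ℕ) (h : Fin t → ℝ × ℝ) (v : ℝ) :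
    followLastBid t h v ∈ Set.Icc (0 : ℝ) 1 := by
  cases t with
  | zero => simp [followLastBid]
  | succ n =>
    simp only [followLastBid]
    split
    · exact ⟨le_min zero_le_one (le_max_left _ _), min_le_left _ _⟩
    · simp

theorem measurable_followLastBid (t : ℕ) :
    Measurable fun p : (Fin t → ℝ × ℝ) × ℝ => followLastBid t p.1 p.2 := by
  cases t with
  | zero => exact measurable_const
  | succ n =>
    have hb : Measurable fun p : (Fin (n + 1) → ℝ × ℝ) × ℝ =>
        min 1 (max 0 (p.1 (Fin.last n)).2) :=
      measurable_const.min (measurable_const.max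
        ((measurable_pi_apply (Fin.last n)).comp measurable_fst).snd)
    exact Measurable.ite (measurableSet_le hb measurable_snd) hb measurable_const

theorem followLastBid_succ (v m : ℕ → ℝ) {t : ℕ} (hm : m t ∈ Set.Icc (0 : ℝ) 1) (w : ℝ) :
    followLastBid (t + 1) (fun s => (v s, m s)) w = if m t ≤ w then m t else 0 := by
  simp [followLastBid, max_eq_right hm.1, min_eq_right hm.2]

theorem max_sub_fpaReward_le_two {b v m : ℝ} (hb : b ≤ 1) (hv : v ∈ Set.Icc (0 : ℝ) 1)
    (hm : 0 ≤ m) : max (v - m) 0 - fpaReward b v m ≤ 2 := by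
  have : max (v - m) 0 ≤ 1 := max_le (by linarith [hv.2]) zero_le_one
  unfold fpaReward
  split <;> linarith [hv.1]

theorem max_sub_fpaReward_bestBid_eq_zero {v m : ℝ} (hv : 0 ≤ v) :
    max (v - m) 0 - fpaReward (if m ≤ v then m else 0) v m = 0 := by
  unfold fpaReward
  by_cases h : m ≤ v
  · simp [h]
  · have hm : ¬ m ≤ 0 := fun hm => h (hm.trans hv)
    simp [h, hm, max_eq_right (sub_nonpos.mpr (not_le.mp h).le)]

theorem sum_le_mul_numSwitches_add_one {T : ℕ} {c : ℝ} {m f : ℕ → ℝ} (hc : 0 ≤ c)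
    (hf_le : ∀ t < T, f t ≤ c) (hf_zero : ∀ t, t + 1 < T → m (t + 1) = m t → f (t + 1) = 0) :
    ∑ t ∈ range T, f t ≤ c * (numSwitches m T + 1) := by
  rcases T with _ | n
  · simpa [numSwitches] using hc
  have hswitch : ∀ t ∈ range n, f (t + 1) ≤ c * if m (t + 1) ≠ m t then 1 else 0 := by
    intro t ht
    have ht : t + 1 < n + 1 := by simpa using ht
    by_cases hmt : m (t + 1) = m t
    · simp [hf_zero t ht hmt, hmt]
    · simpa [hmt] using hf_le (t + 1) ht
  calc ∑ t ∈ range (n + 1), f t = ∑ t ∈ range n, f (t + 1) + f 0 := sum_range_succ' f n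
    _ ≤ c * numSwitches m (n + 1) + c := by
      rw [numSwitches, Nat.add_sub_cancel, mul_sum]
      exact add_le_add (sum_le_sum hswitch) (hf_le 0 n.succ_pos)
    _ = c * (numSwitches m (n + 1) + 1) := by ring

/-- Upper bound under the switching measure: there is a single policy whose expected
dynamic regret on every sequence in `[0,1]²` is `O(L_T + 1)` up to polylogarithmic
factors in `T`, where `L_T` is the number of switches of the opponents' highest bids. -/
theorem adaptive_switching_upper_bound :
    ∃ C : ℝ, 0 < C ∧ ∃ k : ℕ, ∀ T : ℕ, 2 ≤ T → ∃ π : BidPolicy T,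
      ∀ v m : ℕ → ℝ,
        (∀ t < T, v t ∈ Set.Icc (0:ℝ) 1) → (∀ t < T, m t ∈ Set.Icc (0:ℝ) 1) →
        π.expRegret v m ≤
          C * (numSwitches m T + 1) * (1 + Real.log T) ^ k := by
  refine ⟨2, two_pos, 0, fun T _ =>
    ⟨.ofDeterministic followLastBid followLastBid_mem measurable_followLastBid,
      fun v m hv hm => ?_⟩⟩
  rw [BidPolicy.expRegret_ofDeterministic, pow_zero, mul_one]
  refine sum_le_mul_numSwitches_add_one zero_le_two
    (fun t ht => max_sub_fpaReward_le_two (followLastBid_mem _ _ _).2 (hv t ht) (hm t ht).1)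
    (fun t ht hmt => ?_)
  rw [followLastBid_succ v m (hm t (by omega)), ← hmt]
  exact max_sub_fpaReward_bestBid_eq_zero (hv (t + 1) ht).1
end

section
/- There exist constants C > 0 and k ∈ ℕ such that for every integer T ≥ 2 there exists a single randomized bidding policy π over T rounds such that for every sequence (v_t, m_t)_{t=1}^T ⊂ [0,1]^2 with V_T ≥ log T, the expected dynamic regret of π on this sequence is at most C · min{√(T·V_T), L_T} · (1 + log T)^k, where V_T = Σ_{t=2}^T |m_t − m_{t−1}| and L_T = Σ_{t=2}^T 𝟙[m_t ≠ m_{t−1}] (best-of-both-worlds dynamic regret). -/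
open Finset MeasureTheory

noncomputable def bidRegret (b v m : ℝ) : ℝ := max (v - m) 0 - fpaReward b v m

lemma bidRegret_nonneg (b v m : ℝ) : 0 ≤ bidRegret b v m := by
  unfold bidRegret fpaReward
  split_ifs
  · grind
  · simp

lemma bidRegret_le_one {b v m : ℝ} (hbv : b ≤ v) (hv : v ≤ 1) (hm : 0 ≤ m) :
    bidRegret b v m ≤ 1 := by
  unfold bidRegret fpaReward
  split_ifs <;> grind

lemma measurable_bidRegret : Measurable fun x : ℝ × ℝ × ℝ => bidRegret x.1 x.2.1 x.2.2 := by
  unfold bidRegret fpaReward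
  refine ((measurable_snd.fst.sub measurable_snd.snd).max measurable_const).sub ?_
  exact Measurable.ite (measurableSet_le measurable_snd.snd measurable_fst)
    (measurable_snd.fst.sub measurable_fst) measurable_const

/-- The clamp to `[0, 1]` only makes the bid admissible for arbitrary inputs: it is inactive
when `v ∈ [0, 1]` and `pm + ε ≥ 0`. -/
noncomputable def marginBid (ε pm v : ℝ) : ℝ := max 0 (min 1 (min v (pm + ε)))

lemma marginBid_mem (ε pm v : ℝ) : marginBid ε pm v ∈ Set.Icc (0 : ℝ) 1 :=
  ⟨le_max_left _ _, max_le zero_le_one (min_le_left _ _)⟩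

lemma continuous_marginBid (ε : ℝ) : Continuous fun x : ℝ × ℝ => marginBid ε x.1 x.2 := by
  unfold marginBid; fun_prop

lemma marginBid_eq {ε pm v : ℝ} (hv : v ∈ Set.Icc (0 : ℝ) 1) (hpm : 0 ≤ pm + ε) :
    marginBid ε pm v = min v (pm + ε) := by
  unfold marginBid
  rw [min_eq_right (min_le_left _ _ |>.trans hv.2), max_eq_right (le_min hv.1 hpm)]

lemma bidRegret_marginBid_le_one {ε pm v m : ℝ} (hε : 0 ≤ ε) (hpm : 0 ≤ pm)
    (hv : v ∈ Set.Icc (0 : ℝ) 1) (hm : 0 ≤ m) : bidRegret (marginBid ε pm v) v m ≤ 1 :=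
  bidRegret_le_one (by rw [marginBid_eq hv (by positivity)]; exact min_le_left _ _) hv.2 hm

/-- A bid `ε` above last round's competing bid loses only if the competing bid moved up by more
than `ε`, and otherwise overpays by at most `ε` plus that movement. -/
lemma bidRegret_marginBid_le {ε pm v m : ℝ} (hε : 0 ≤ ε) (hpm : 0 ≤ pm)
    (hv : v ∈ Set.Icc (0 : ℝ) 1) (hm : 0 ≤ m) :
    bidRegret (marginBid ε pm v) v m ≤ ε + |m - pm| + if ε < |m - pm| then 1 else 0 := by
  have hle_one := bidRegret_marginBid_le_one hε hpm hv hm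
  rw [marginBid_eq hv (by positivity)] at hle_one ⊢
  have : pm - m ≤ |m - pm| := by rw [abs_sub_comm]; exact le_abs_self _
  unfold bidRegret fpaReward at hle_one ⊢
  split_ifs at hle_one ⊢ with hwin hjump <;> grind [abs_nonneg]

/-- Last round's highest competing bid; before the first round any value in `[0, 1]` would do. -/
def prevBid (m : ℕ → ℝ) : ℕ → ℝ
  | 0 => 1
  | s + 1 => m s

noncomputable def expertLoss (ε : ℝ) (v m : ℕ → ℝ) (s : ℕ) : ℝ :=
  bidRegret (marginBid ε (prevBid m s) (v s)) (v s) (m s)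

noncomputable def jumpCount (ε : ℝ) (m : ℕ → ℝ) (T : ℕ) : ℝ :=
  ∑ t ∈ range (T - 1), if ε < |m (t + 1) - m t| then 1 else 0

section Sequences

variable {T : ℕ} {v m : ℕ → ℝ}

lemma abs_increment_le_one (hm : ∀ t < T, m t ∈ Set.Icc (0 : ℝ) 1) {t : ℕ}
    (ht : t ∈ range (T - 1)) :
    |m (t + 1) - m t| ≤ 1 := by
  have ht := mem_range.1 ht
  have h₁ := hm (t + 1) (by omega)
  have h₀ := hm t (by omega)
  exact abs_sub_le_iff.2 ⟨by linarith [h₁.2, h₀.1], by linarith [h₁.1, h₀.2]⟩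

lemma totalVariation_le (hm : ∀ t < T, m t ∈ Set.Icc (0 : ℝ) 1) : totalVariation m T ≤ T :=
  calc totalVariation m T ≤ (range (T - 1)).card • (1 : ℝ) :=
        sum_le_card_nsmul _ _ _ fun _ ht => abs_increment_le_one hm ht
    _ ≤ T := by simp

lemma totalVariation_le_numSwitches (hm : ∀ t < T, m t ∈ Set.Icc (0 : ℝ) 1) :
    totalVariation m T ≤ numSwitches m T := by
  refine sum_le_sum fun t ht => ?_
  split_ifs with hjump
  · exact abs_increment_le_one hm ht
  · simp [not_not.1 hjump]

lemma jumpCount_le_numSwitches {ε : ℝ} (hε : 0 ≤ ε) (m : ℕ → ℝ) (T : ℕ) :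
    jumpCount ε m T ≤ numSwitches m T := by
  refine sum_le_sum fun t _ => ?_
  split_ifs with hjump hswitch <;> norm_num
  exact hswitch (sub_ne_zero.1 (abs_pos.1 (hε.trans_lt hjump)))

lemma jumpCount_le_div {ε : ℝ} (hε : 0 < ε) (m : ℕ → ℝ) (T : ℕ) :
    jumpCount ε m T ≤ totalVariation m T / ε := by
  rw [totalVariation, sum_div]
  refine sum_le_sum fun t _ => ?_
  split_ifs with hjump
  · exact (one_le_div hε).2 hjump.le
  · positivity

lemma prevBid_mem (hm : ∀ t < T, m t ∈ Set.Icc (0 : ℝ) 1) {s : ℕ} (hs : s < T) :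
    prevBid m s ∈ Set.Icc (0 : ℝ) 1 := by
  cases s with
  | zero => norm_num [prevBid]
  | succ s => exact hm s (by omega)

lemma expertLoss_mem {ε : ℝ} (hε : 0 ≤ ε) (hv : ∀ t < T, v t ∈ Set.Icc (0 : ℝ) 1)
    (hm : ∀ t < T, m t ∈ Set.Icc (0 : ℝ) 1) {s : ℕ} (hs : s < T) :
    expertLoss ε v m s ∈ Set.Icc (0 : ℝ) 1 :=
  ⟨bidRegret_nonneg _ _ _,
    bidRegret_marginBid_le_one hε (prevBid_mem hm hs).1 (hv s hs) (hm s hs).1⟩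

lemma sum_expertLoss_le {ε : ℝ} (hε : 0 ≤ ε) (hv : ∀ t < T, v t ∈ Set.Icc (0 : ℝ) 1)
    (hm : ∀ t < T, m t ∈ Set.Icc (0 : ℝ) 1) :
    ∑ s ∈ range T, expertLoss ε v m s ≤ 1 + T * ε + totalVariation m T + jumpCount ε m T := by
  cases T with
  | zero => simp [totalVariation, jumpCount]
  | succ T =>
    have hstep : ∀ s ∈ range T, expertLoss ε v m (s + 1)
        ≤ ε + |m (s + 1) - m s| + if ε < |m (s + 1) - m s| then 1 else 0 := fun s hs =>
      have hs := mem_range.1 hs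
      bidRegret_marginBid_le hε (hm s (by omega)).1 (hv (s + 1) (by omega))
        (hm (s + 1) (by omega)).1
    have hfirst := (expertLoss_mem hε hv hm T.succ_pos).2
    rw [sum_range_succ']
    calc ∑ s ∈ range T, expertLoss ε v m (s + 1) + expertLoss ε v m 0
        ≤ ∑ s ∈ range T, (ε + |m (s + 1) - m s| + if ε < |m (s + 1) - m s| then 1 else 0) + 1 :=
          add_le_add (sum_le_sum hstep) hfirst
      _ = 1 + T * ε + totalVariation m (T + 1) + jumpCount ε m (T + 1) := by
          simp only [sum_add_distrib, sum_const, card_range, nsmul_eq_mul, totalVariation,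
            jumpCount, Nat.add_sub_cancel]
          ring
      _ ≤ 1 + (T + 1 : ℕ) * ε + totalVariation m (T + 1) + jumpCount ε m (T + 1) := by
          gcongr; simp

lemma sum_expertLoss_zero_le (hv : ∀ t < T, v t ∈ Set.Icc (0 : ℝ) 1)
    (hm : ∀ t < T, m t ∈ Set.Icc (0 : ℝ) 1) :
    ∑ s ∈ range T, expertLoss 0 v m s ≤ 1 + 2 * numSwitches m T := by
  have := sum_expertLoss_le le_rfl hv hm
  linarith [totalVariation_le_numSwitches hm, jumpCount_le_numSwitches le_rfl m T]

/-- The margin `⌈√(T V)⌉ / T ≈ √(V / T)` balances the overpayment `T ε` against the number of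
lost rounds `V / ε`. -/
lemma exists_sum_expertLoss_le_sqrt (hv : ∀ t < T, v t ∈ Set.Icc (0 : ℝ) 1)
    (hm : ∀ t < T, m t ∈ Set.Icc (0 : ℝ) 1) (hV : 0 < totalVariation m T) :
    ∃ j ≤ T, ∑ s ∈ range T, expertLoss (j / T) v m s
      ≤ 2 + 3 * Real.sqrt (T * totalVariation m T) := by
  set V := totalVariation m T
  set S := Real.sqrt (T * V)
  have hT : (0 : ℝ) < T := by
    rcases T.eq_zero_or_pos with rfl | hT
    · simp [V, totalVariation] at hV
    · exact_mod_cast hT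
  have hVT : V ≤ T := totalVariation_le hm
  have hS : 0 < S := Real.sqrt_pos.2 (by positivity)
  have hSsq : S ^ 2 = T * V := Real.sq_sqrt (by positivity)
  have hST : S ≤ T := Real.sqrt_le_iff.2 ⟨hT.le, by nlinarith⟩
  have hVS : V ≤ S := Real.le_sqrt_of_sq_le (by nlinarith)
  set j := ⌈S⌉₊
  have hSj : S ≤ j := Nat.le_ceil S
  have hjS : (j : ℝ) < S + 1 := Nat.ceil_lt_add_one hS.le
  have hε : 0 < (j : ℝ) / T := by positivity
  have hjump : jumpCount (j / T) m T ≤ S :=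
    calc jumpCount (j / T) m T ≤ V / (j / T) := jumpCount_le_div hε m T
      _ ≤ V / (S / T) := by gcongr
      _ = S := by field_simp; nlinarith
  refine ⟨j, by exact_mod_cast (Nat.ceil_le.2 hST), ?_⟩
  have := sum_expertLoss_le hε.le hv hm
  rw [mul_div_cancel₀ _ hT.ne'] at this
  linarith

end Sequences

lemma exp_neg_le_one_sub_half {x : ℝ} (h₀ : 0 ≤ x) (h₁ : x ≤ 1) :
    Real.exp (-x) ≤ 1 - x / 2 := by
  have hconv := convexOn_exp.2 (Set.mem_univ 0) (Set.mem_univ (-1)) (sub_nonneg.2 h₁) h₀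
    (sub_add_cancel 1 x)
  simp only [smul_eq_mul, mul_zero, zero_add, mul_neg, mul_one, Real.exp_zero] at hconv
  nlinarith [Real.exp_neg_one_lt_half]

section Hedge

variable {ι : Type*} (s : Finset ι)

noncomputable def hedgeWeight (L : ι → ℝ) (i : ι) : ℝ :=
  Real.exp (-L i) / ∑ j ∈ s, Real.exp (-L j)

noncomputable def hedgePotential (ℓ : ι → ℕ → ℝ) (t : ℕ) : ℝ :=
  ∑ i ∈ s, Real.exp (-∑ u ∈ range t, ℓ i u)

variable {s}

lemma hedgeWeight_nonneg (L : ι → ℝ) (i : ι) : 0 ≤ hedgeWeight s L i := by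
  unfold hedgeWeight; positivity

lemma sum_hedgeWeight (hs : s.Nonempty) (L : ι → ℝ) : ∑ i ∈ s, hedgeWeight s L i = 1 := by
  simp only [hedgeWeight, ← sum_div]
  exact div_self (sum_pos (fun _ _ => Real.exp_pos _) hs).ne'

lemma hedgePotential_pos (hs : s.Nonempty) (ℓ : ι → ℕ → ℝ) (t : ℕ) :
    0 < hedgePotential s ℓ t :=
  sum_pos (fun _ _ => Real.exp_pos _) hs

lemma log_hedgePotential_succ_le (hs : s.Nonempty) (ℓ : ι → ℕ → ℝ) (t : ℕ)
    (hℓ : ∀ i ∈ s, ℓ i t ∈ Set.Icc (0 : ℝ) 1) :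
    Real.log (hedgePotential s ℓ (t + 1)) ≤ Real.log (hedgePotential s ℓ t)
      - (∑ i ∈ s, hedgeWeight s (fun j => ∑ u ∈ range t, ℓ j u) i * ℓ i t) / 2 := by
  set W := hedgePotential s ℓ t
  set P := ∑ i ∈ s, hedgeWeight s (fun j => ∑ u ∈ range t, ℓ j u) i * ℓ i t
  have hW := hedgePotential_pos hs ℓ t
  have hmix : ∑ i ∈ s, Real.exp (-∑ u ∈ range t, ℓ i u) * ℓ i t = W * P := by
    rw [mul_sum]
    refine sum_congr rfl fun i _ => ?_
    simp only [W, hedgePotential, hedgeWeight] at hW ⊢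
    field_simp
  have hstep : hedgePotential s ℓ (t + 1) ≤ W * Real.exp (-(P / 2)) :=
    calc hedgePotential s ℓ (t + 1)
        = ∑ i ∈ s, Real.exp (-∑ u ∈ range t, ℓ i u) * Real.exp (-ℓ i t) := by
          simp only [hedgePotential, sum_range_succ, neg_add, Real.exp_add]
      _ ≤ ∑ i ∈ s, Real.exp (-∑ u ∈ range t, ℓ i u) * (1 - ℓ i t / 2) :=
          sum_le_sum fun i hi => by
            gcongr; exact exp_neg_le_one_sub_half (hℓ i hi).1 (hℓ i hi).2
      _ = W * (1 - P / 2) := by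
          simp only [mul_sub, mul_one, sum_sub_distrib, mul_div_assoc', ← sum_div, hmix]
          simp only [W, hedgePotential]
      _ ≤ W * Real.exp (-(P / 2)) := by gcongr; linarith [Real.add_one_le_exp (-(P / 2))]
  calc Real.log (hedgePotential s ℓ (t + 1)) ≤ Real.log (W * Real.exp (-(P / 2))) :=
        Real.log_le_log (hedgePotential_pos hs ℓ _) hstep
    _ = Real.log W - P / 2 := by rw [Real.log_mul hW.ne' (Real.exp_pos _).ne', Real.log_exp]; ring

/-- The potential starts at `|s|`, shrinks by a factor `exp (-Pₜ / 2)` in round `t`, where `Pₜ`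
is the expected loss of that round, and always stays above `exp (-∑ₜ ℓ i₀ t)`. -/
theorem hedge_loss_le (hs : s.Nonempty) {T : ℕ} (ℓ : ι → ℕ → ℝ)
    (hℓ : ∀ i ∈ s, ∀ t < T, ℓ i t ∈ Set.Icc (0 : ℝ) 1) {i₀ : ι} (hi₀ : i₀ ∈ s) :
    ∑ t ∈ range T, ∑ i ∈ s, hedgeWeight s (fun j => ∑ u ∈ range t, ℓ j u) i * ℓ i t
      ≤ 2 * (Real.log s.card + ∑ t ∈ range T, ℓ i₀ t) := by
  have htelescope := sum_range_sub (fun t => Real.log (hedgePotential s ℓ t)) T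
  have hsteps := sum_le_sum fun t ht =>
    sub_le_iff_le_add'.2 ((log_hedgePotential_succ_le hs ℓ t fun i hi =>
      hℓ i hi t (mem_range.1 ht)).trans_eq (sub_eq_add_neg _ _))
  have hinit : hedgePotential s ℓ 0 = s.card := by simp [hedgePotential]
  have hfinal : -∑ u ∈ range T, ℓ i₀ u ≤ Real.log (hedgePotential s ℓ T) := by
    rw [← Real.log_exp (-_)]
    exact Real.log_le_log (Real.exp_pos _)
      (single_le_sum (f := fun i => Real.exp (-∑ u ∈ range T, ℓ i u))
        (fun _ _ => (Real.exp_pos _).le) hi₀)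
  rw [htelescope, hinit, sum_neg_distrib, ← sum_div] at hsteps
  linarith

end Hedge

section Sampling

/-- Inverse-CDF sampling: a uniform `ω ∈ [0, 1)` selects `g i` when it falls in
`[p 0 + ⋯ + p (i - 1), p 0 + ⋯ + p i)`, so `g i` is drawn with probability `p i`. -/
noncomputable def inverseCdfSample (p : ℕ → ℝ) (K : ℕ) (g : ℕ → ℝ) (ω : ℝ) : ℝ :=
  ∑ i ∈ range K,
    (Set.Ico (∑ j ∈ range i, p j) (∑ j ∈ range (i + 1), p j)).indicator (fun _ => g i) ω

variable {p : ℕ → ℝ} {K : ℕ} {ω : ℝ}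

lemma monotone_sum_range (hp : ∀ i, 0 ≤ p i) : Monotone fun n => ∑ j ∈ range n, p j :=
  monotone_nat_of_le_succ fun n => by simpa [sum_range_succ] using hp n

lemma exists_mem_Ico_sum_range (hω₀ : 0 ≤ ω) (hωK : ω < ∑ j ∈ range K, p j) :
    ∃ i < K, ω ∈ Set.Ico (∑ j ∈ range i, p j) (∑ j ∈ range (i + 1), p j) := by
  induction K with
  | zero => simp at hωK; linarith
  | succ K ih =>
    by_cases hω : ω < ∑ j ∈ range K, p j
    · obtain ⟨i, hi, hmem⟩ := ih hω
      exact ⟨i, by omega, hmem⟩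
    · exact ⟨K, K.lt_succ_self, not_lt.1 hω, hωK⟩

lemma inverseCdfSample_eq_of_mem (hp : ∀ i, 0 ≤ p i) (g : ℕ → ℝ) {i : ℕ} (hi : i < K)
    (hω : ω ∈ Set.Ico (∑ j ∈ range i, p j) (∑ j ∈ range (i + 1), p j)) :
    inverseCdfSample p K g ω = g i := by
  rw [inverseCdfSample, sum_eq_single_of_mem i (mem_range.2 hi), Set.indicator_of_mem hω]
  intro j _ hji
  exact Set.indicator_of_notMem
    (Set.disjoint_left.1 ((monotone_sum_range hp).pairwise_disjoint_on_Ico_succ hji.symm) hω) _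

lemma inverseCdfSample_mem (hp : ∀ i, 0 ≤ p i) {g : ℕ → ℝ} (hg : ∀ i, g i ∈ Set.Icc (0 : ℝ) 1)
    (ω : ℝ) : inverseCdfSample p K g ω ∈ Set.Icc (0 : ℝ) 1 := by
  by_cases h : ∃ i < K, ω ∈ Set.Ico (∑ j ∈ range i, p j) (∑ j ∈ range (i + 1), p j)
  · obtain ⟨i, hi, hω⟩ := h
    exact inverseCdfSample_eq_of_mem hp g hi hω ▸ hg i
  · push Not at h
    rw [inverseCdfSample, sum_eq_zero fun i hi => Set.indicator_of_notMem (h i (mem_range.1 hi)) _]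
    exact ⟨le_rfl, zero_le_one⟩

lemma comp_inverseCdfSample (hp : ∀ i, 0 ≤ p i) (hω₀ : 0 ≤ ω) (hωK : ω < ∑ j ∈ range K, p j)
    (φ : ℝ → ℝ) (g : ℕ → ℝ) : φ (inverseCdfSample p K g ω) = inverseCdfSample p K (φ ∘ g) ω := by
  obtain ⟨i, hi, hω⟩ := exists_mem_Ico_sum_range hω₀ hωK
  rw [inverseCdfSample_eq_of_mem hp g hi hω, inverseCdfSample_eq_of_mem hp _ hi hω]
  rfl

lemma integrable_inverseCdfSample {μ : Measure ℝ} [IsFiniteMeasure μ] (p : ℕ → ℝ) (K : ℕ)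
    (g : ℕ → ℝ) : Integrable (inverseCdfSample p K g) μ := by
  unfold inverseCdfSample
  exact integrable_finsetSum _ fun i _ => (integrable_const _).indicator measurableSet_Ico

lemma integral_inverseCdfSample (hp : ∀ i, 0 ≤ p i) (hK : ∑ j ∈ range K, p j = 1) (g : ℕ → ℝ) :
    ∫ ω in Set.Ico 0 1, inverseCdfSample p K g ω = ∑ i ∈ range K, p i * g i := by
  unfold inverseCdfSample
  rw [integral_finsetSum _ fun i _ => (integrable_const _).indicator measurableSet_Ico]
  refine sum_congr rfl fun i hi => ?_
  have hsub : Set.Ico (∑ j ∈ range i, p j) (∑ j ∈ range (i + 1), p j) ⊆ Set.Ico 0 1 := by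
    rw [← hK]
    exact Set.Ico_subset_Ico (sum_nonneg fun j _ => hp j)
      (monotone_sum_range hp (mem_range.1 hi))
  rw [integral_indicator_const _ measurableSet_Ico, measureReal_restrict_apply measurableSet_Ico,
    Set.inter_eq_left.2 hsub, Real.volume_real_Ico_of_le (monotone_sum_range hp i.le_succ),
    sum_range_succ_sub_sum, smul_eq_mul]

lemma Measurable.inverseCdfSample {α : Type*} [MeasurableSpace α] {p g : α → ℕ → ℝ} {ω : α → ℝ}
    (hp : ∀ i, Measurable fun a => p a i) (hg : ∀ i, Measurable fun a => g a i)
    (hω : Measurable ω) : Measurable fun a => _root_.inverseCdfSample (p a) K (g a) (ω a) := by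
  unfold _root_.inverseCdfSample
  refine Finset.measurable_sum _ fun i _ => ?_
  simp only [Set.indicator_apply, Set.mem_Ico]
  refine Measurable.ite ((measurableSet_le ?_ hω).inter (measurableSet_lt hω ?_)) (hg i)
    measurable_const <;> exact Finset.measurable_sum _ fun j _ => hp j

end Sampling

noncomputable def padHistory {t : ℕ} (h : Fin t → ℝ × ℝ) (s : ℕ) : ℝ × ℝ :=
  if hs : s < t then h ⟨s, hs⟩ else 0

noncomputable def hedgeBid (T : ℕ) (v m : ℕ → ℝ) (t : ℕ) (vt ω : ℝ) : ℝ :=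
  inverseCdfSample (hedgeWeight (range (T + 1)) fun i => ∑ s ∈ range t, expertLoss (i / T) v m s)
    (T + 1) (fun i => marginBid (i / T) (prevBid m t) vt) ω

lemma prevBid_congr {m m' : ℕ → ℝ} {t : ℕ} (h : ∀ s < t, m s = m' s) :
    prevBid m t = prevBid m' t := by
  cases t with
  | zero => rfl
  | succ t => exact h t t.lt_succ_self

lemma hedgeBid_congr {T t : ℕ} {v m v' m' : ℕ → ℝ} (h : ∀ s < t, v s = v' s ∧ m s = m' s) :
    hedgeBid T v m t = hedgeBid T v' m' t := by
  have hloss : ∀ ε, ∀ s < t, expertLoss ε v m s = expertLoss ε v' m' s := fun ε s hs => by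
    simp only [expertLoss, (h s hs).1, (h s hs).2,
      prevBid_congr fun r hr => (h r (hr.trans hs)).2]
  have hcum : ∀ i : ℕ, ∑ s ∈ range t, expertLoss (i / T) v m s
      = ∑ s ∈ range t, expertLoss (i / T) v' m' s :=
    fun i => sum_congr rfl fun s hs => hloss _ s (mem_range.1 hs)
  funext vt ω
  simp only [hedgeBid, hcum, prevBid_congr fun s hs => (h s hs).2]

section Measurability

variable {α : Type*} [MeasurableSpace α] {v m : α → ℕ → ℝ}

lemma measurable_padHistory {t : ℕ} (s : ℕ) :
    Measurable fun h : Fin t → ℝ × ℝ => padHistory h s := by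
  unfold padHistory
  split
  · exact measurable_pi_apply _
  · exact measurable_const

lemma Measurable.prevBid (hm : ∀ s, Measurable fun a => m a s) (s : ℕ) :
    Measurable fun a => _root_.prevBid (m a) s := by
  cases s with
  | zero => exact measurable_const
  | succ s => exact hm s

lemma Measurable.expertLoss (hv : ∀ s, Measurable fun a => v a s)
    (hm : ∀ s, Measurable fun a => m a s) (ε : ℝ) (s : ℕ) :
    Measurable fun a => _root_.expertLoss ε (v a) (m a) s :=
  measurable_bidRegret.comp
    (((continuous_marginBid ε).measurable.comp ((Measurable.prevBid hm s).prodMk (hv s))).prodMk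
      ((hv s).prodMk (hm s)))

lemma Measurable.hedgeBid {T t : ℕ} {vt ω : α → ℝ} (hv : ∀ s, Measurable fun a => v a s)
    (hm : ∀ s, Measurable fun a => m a s) (hvt : Measurable vt) (hω : Measurable ω) :
    Measurable fun a => _root_.hedgeBid T (v a) (m a) t (vt a) (ω a) := by
  refine Measurable.inverseCdfSample (fun i => ?_) (fun i => ?_) hω
  · have hcum : ∀ j : ℕ,
        Measurable fun a => ∑ s ∈ range t, _root_.expertLoss (j / T) (v a) (m a) s :=
      fun j => Finset.measurable_sum _ fun s _ => Measurable.expertLoss hv hm _ s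
    simp only [hedgeWeight]
    fun_prop
  · exact (continuous_marginBid _).measurable.comp ((Measurable.prevBid hm t).prodMk hvt)

end Measurability

/-- The randomness is one uniform draw `ω ∈ [0, 1)`, reused in every round: by linearity of
expectation only the per-round distributions of the bids matter. -/
noncomputable def hedgePolicy (T : ℕ) : BidPolicy T where
  Ω := ℝ
  μ := volume.restrict (Set.Ico 0 1)
  isProb := ⟨by simp⟩
  bid t h vt ω := hedgeBid T (fun s => (padHistory h s).1) (fun s => (padHistory h s).2) t vt ω
  bid_mem t h vt ω :=
    inverseCdfSample_mem (hedgeWeight_nonneg _) (fun _ => marginBid_mem _ _ _) ω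
  bid_measurable t :=
    Measurable.hedgeBid (fun s => (measurable_padHistory s).fst.comp measurable_fst)
      (fun s => (measurable_padHistory s).snd.comp measurable_fst) measurable_snd.fst
      measurable_snd.snd

lemma hedgePolicy_bids (T : ℕ) (v m : ℕ → ℝ) (t : ℕ) :
    (hedgePolicy T).bids v m t = hedgeBid T v m t (v t) := by
  show hedgeBid T _ _ t (v t) = _
  rw [hedgeBid_congr (v' := v) (m' := m) fun s hs => by simp [padHistory, hs]]

lemma expRegret_hedgePolicy (T : ℕ) (v m : ℕ → ℝ) :
    (hedgePolicy T).expRegret v m = ∑ t ∈ range T, ∑ i ∈ range (T + 1),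
      hedgeWeight (range (T + 1)) (fun j => ∑ s ∈ range t, expertLoss (j / T) v m s) i
        * expertLoss (i / T) v m t := by
  have hsample : ∀ ω ∈ Set.Ico (0 : ℝ) 1, ∀ t,
      bidRegret ((hedgePolicy T).bids v m t ω) (v t) (m t)
        = inverseCdfSample (hedgeWeight (range (T + 1))
            fun j => ∑ s ∈ range t, expertLoss (j / T) v m s) (T + 1)
            (fun i => expertLoss (i / T) v m t) ω := fun ω hω t => by
    rw [hedgePolicy_bids]
    exact comp_inverseCdfSample (hedgeWeight_nonneg _) hω.1
      (hω.2.trans_eq (sum_hedgeWeight nonempty_range_add_one _).symm)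
      (fun b => bidRegret b (v t) (m t)) (fun i => marginBid (i / T) (prevBid m t) (v t))
  show ∫ ω : ℝ in Set.Ico 0 1, ∑ t ∈ range T, bidRegret ((hedgePolicy T).bids v m t ω) (v t) (m t)
    = _
  rw [setIntegral_congr_fun measurableSet_Ico fun ω hω => sum_congr rfl fun t _ => hsample ω hω t,
    integral_finsetSum _ fun t _ => integrable_inverseCdfSample _ _ _]
  exact sum_congr rfl fun t _ =>
    integral_inverseCdfSample (hedgeWeight_nonneg _) (sum_hedgeWeight nonempty_range_add_one _) _

lemma expRegret_hedgePolicy_le {T : ℕ} {v m : ℕ → ℝ} (hv : ∀ t < T, v t ∈ Set.Icc (0 : ℝ) 1)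
    (hm : ∀ t < T, m t ∈ Set.Icc (0 : ℝ) 1) {i : ℕ} (hi : i ≤ T) :
    (hedgePolicy T).expRegret v m
      ≤ 2 * (Real.log (T + 1) + ∑ t ∈ range T, expertLoss (i / T) v m t) := by
  rw [expRegret_hedgePolicy]
  have := hedge_loss_le nonempty_range_add_one (fun j t => expertLoss (j / T) v m t)
    (fun j _ t ht => expertLoss_mem (by positivity) hv hm ht) (mem_range.2 (Nat.lt_succ_of_le hi))
  simpa using this

/-- Best-of-both-worlds: there is a single policy whose expected dynamic regret on every
sequence in `[0,1]²` with `V_T ≥ log T` is `O(min {√(T·V_T), L_T})` up to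
polylogarithmic factors in `T`. -/
theorem best_of_both_worlds_upper_bound :
    ∃ C : ℝ, 0 < C ∧ ∃ k : ℕ, ∀ T : ℕ, 2 ≤ T → ∃ π : BidPolicy T,
      ∀ v m : ℕ → ℝ,
        (∀ t < T, v t ∈ Set.Icc (0:ℝ) 1) → (∀ t < T, m t ∈ Set.Icc (0:ℝ) 1) →
        Real.log T ≤ totalVariation m T →
        π.expRegret v m ≤
          C * min (Real.sqrt ((T : ℝ) * totalVariation m T)) (numSwitches m T) *
            (1 + Real.log T) ^ k := by
  refine ⟨14, by norm_num, 0, fun T hT => ⟨hedgePolicy T, fun v m hv hm hV => ?_⟩⟩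
  set V := totalVariation m T
  set S := Real.sqrt (T * V)
  set L := numSwitches m T
  have hT : (2 : ℝ) ≤ T := by exact_mod_cast hT
  have hlog2 : 1 / 2 < Real.log 2 := by linarith [Real.log_two_gt_d9]
  have hlogT : Real.log 2 ≤ Real.log T := Real.log_le_log two_pos hT
  have hlogT1 : Real.log (T + 1) ≤ 2 * Real.log T := by
    have := Real.log_le_log (by positivity) (show (T : ℝ) + 1 ≤ T ^ 2 by nlinarith)
    rwa [Real.log_pow, Nat.cast_ofNat] at this
  have hVL : V ≤ L := totalVariation_le_numSwitches hm
  have hVS : V ≤ S := Real.le_sqrt_of_sq_le (by nlinarith [totalVariation_le hm])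
  have hS : 1 ≤ S := Real.one_le_sqrt.2 (by nlinarith)
  obtain ⟨j, hjT, hj⟩ := exists_sum_expertLoss_le_sqrt hv hm (by linarith)
  have hsqrt := expRegret_hedgePolicy_le hv hm hjT
  have hswitch := expRegret_hedgePolicy_le hv hm T.zero_le
  rw [Nat.cast_zero, zero_div] at hswitch
  have hzero := sum_expertLoss_zero_le hv hm
  rw [pow_zero, mul_one]
  rcases le_total S L with hSL | hLS
  · rw [min_eq_left hSL]; linarith
  · rw [min_eq_right hLS]; linarith
end
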